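/- arXiv:1305.1532 — 2 statements merged into one kernel-verified Lean document; each statement's English description precedes it below -/
import Mathlib

section
/- (Williamson normal form, uniqueness) If Σ is a 2n×2n real symmetric positive definite matrix and M₁, M₂ are symplectic matrices with M_i·Σ·M_iᵀ = diag(Λ_i,Λ_i), Λ_i = diag(ε^{(i)}_1,...,ε^{(i)}_n) positive diagonal, then the multisets {ε^{(1)}_1,...,ε^{(1)}_n} and {ε^{(2)}_1,...,ε^{(2)}_n} coincide. -/
open Matrix Polynomial

noncomputable section

/-- The 2×2 standard symplectic matrix. -/
def J2 : Matrix (Fin 2) (Fin 2) ℝ := !![0, 1; -1, 0]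

/-- The 2n×2n block-diagonal symplectic matrix `diag(J₂, ..., J₂)`. -/
def Jblock (n : ℕ) : Matrix (Fin (2 * n)) (Fin (2 * n)) ℝ :=
  fun i j =>
    if i.val / 2 = j.val / 2 then
      J2 ⟨i.val % 2, by omega⟩ ⟨j.val % 2, by omega⟩
    else 0

/-- The 2×2 block of a 2n×2n matrix at block position (m, k). -/
def blk {n : ℕ} (A : Matrix (Fin (2 * n)) (Fin (2 * n)) ℝ) (m k : Fin n) :
    Matrix (Fin 2) (Fin 2) ℝ :=
  fun i j =>
    A ⟨2 * m.val + i.val, by have := m.isLt; have := i.isLt; omega⟩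
      ⟨2 * k.val + j.val, by have := k.isLt; have := j.isLt; omega⟩

/-- `S` has eigenemittances `ε`: the spectrum of `S · J_{2n}` (over ℂ, with
multiplicity) is `±iε₁, ..., ±iε_n`. -/
def hasEigenemittances {n : ℕ} (S : Matrix (Fin (2 * n)) (Fin (2 * n)) ℝ)
    (ε : Fin n → ℝ) : Prop :=
  ((S * Jblock n).map (Complex.ofReal)).charpoly =
    ∏ m : Fin n, ((X - C (Complex.I * (ε m : ℂ))) * (X + C (Complex.I * (ε m : ℂ))))

/-- The standard 2n×2n symplectic form in the `(q₁,...,q_n,p₁,...,p_n)` ordering. -/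
def Jstd (n : ℕ) : Matrix (Fin n ⊕ Fin n) (Fin n ⊕ Fin n) ℝ :=
  Matrix.fromBlocks 0 1 (-1) 0

/-!
Symplectic congruence `S ↦ M S Mᵀ` acts on `S J` by similarity, because `Mᵀ J = J M⁻¹`.
For the normal form `D = diag(Λ, Λ)`, `D` commutes with `J` and `(D J)² = -D²` is diagonal with
entries `-ε_m²`, each occurring twice. Comparing the roots of the characteristic polynomial of
`(S J)²` computed through `M₁` and through `M₂` identifies the multisets `{ε_m²}`, and positivity
recovers the `ε_m`.
-/

theorem exists_equiv_of_map_univ_eq {α β γ : Type*} [Fintype α] [Fintype β] {f : α → γ}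
    {g : β → γ} (h : Finset.univ.val.map f = Finset.univ.val.map g) :
    ∃ e : α ≃ β, ∀ a, g (e a) = f a := by
  classical
  refine ⟨Equiv.ofFiberEquiv fun c => Fintype.equivOfCardEq ?_, Equiv.ofFiberEquiv_map _⟩
  have hcount := congrArg (Multiset.count c) h
  simp only [Multiset.count_map] at hcount
  simpa [Fintype.card_subtype, Finset.card_def, Finset.filter_val, eq_comm] using hcount

lemma Jstd_mul_self (n : ℕ) : Jstd n * Jstd n = -1 := by
  simp [Jstd, fromBlocks_multiply, fromBlocks_neg, ← fromBlocks_one]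

lemma charpoly_pow_mul_Jstd_of_symplectic {n : ℕ}
    {M : Matrix (Fin n ⊕ Fin n) (Fin n ⊕ Fin n) ℝ} (hM : M * Jstd n * Mᵀ = Jstd n)
    (S : Matrix (Fin n ⊕ Fin n) (Fin n ⊕ Fin n) ℝ) (k : ℕ) :
    ((M * S * Mᵀ * Jstd n) ^ k).charpoly = ((S * Jstd n) ^ k).charpoly := by
  set N := -(Jstd n * Mᵀ * Jstd n)
  have hMN : M * N = 1 := by
    rw [mul_neg, ← Matrix.mul_assoc, ← Matrix.mul_assoc, hM, Jstd_mul_self, neg_neg]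
  have hJ : Mᵀ * Jstd n = Jstd n * N := by
    rw [mul_neg, ← Matrix.mul_assoc, ← Matrix.mul_assoc, Jstd_mul_self, Matrix.neg_mul,
      Matrix.neg_mul, Matrix.one_mul, neg_neg]
  let U : (Matrix (Fin n ⊕ Fin n) (Fin n ⊕ Fin n) ℝ)ˣ := ⟨M, N, hMN, mul_eq_one_comm.mp hMN⟩
  have hconj : M * S * Mᵀ * Jstd n = U.val * (S * Jstd n) * U⁻¹.val := by
    simp only [U, Units.inv_mk, Matrix.mul_assoc, hJ]
  rw [hconj, Units.conj_pow, charpoly_mul_comm, ← Matrix.mul_assoc, Units.inv_mul,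
    Matrix.one_mul]

lemma roots_prod_X_sub_C_univ {ι R : Type*} [Fintype ι] [CommRing R] [IsDomain R] (d : ι → R) :
    (∏ i, (X - C (d i))).roots = Finset.univ.val.map d := by
  rw [roots_prod _ _ (Finset.prod_ne_zero_iff.2 fun i _ => X_sub_C_ne_zero (d i))]
  simp

lemma fromBlocks_diagonal_mul_Jstd_sq {n : ℕ} (ε : Fin n → ℝ) :
    (fromBlocks (diagonal ε) 0 0 (diagonal ε) * Jstd n) ^ 2 =
      diagonal (Sum.elim (fun m => -ε m ^ 2) (fun m => -ε m ^ 2)) := by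
  simp [Jstd, sq, fromBlocks_multiply, ← fromBlocks_diagonal]

lemma roots_charpoly_fromBlocks_diagonal_mul_Jstd_sq {n : ℕ} (ε : Fin n → ℝ) :
    ((fromBlocks (diagonal ε) 0 0 (diagonal ε) * Jstd n) ^ 2).charpoly.roots =
      2 • Finset.univ.val.map (fun m => -ε m ^ 2) := by
  rw [fromBlocks_diagonal_mul_Jstd_sq, charpoly_diagonal, Fintype.prod_sum_type]
  simp only [Sum.elim_inl, Sum.elim_inr]
  rw [← sq, roots_pow, roots_prod_X_sub_C_univ]

theorem stmt9_general (n : ℕ) (S : Matrix (Fin n ⊕ Fin n) (Fin n ⊕ Fin n) ℝ)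
    (M₁ M₂ : Matrix (Fin n ⊕ Fin n) (Fin n ⊕ Fin n) ℝ) (ε₁ ε₂ : Fin n → ℝ)
    (hM₁ : M₁ * Jstd n * M₁ᵀ = Jstd n) (hM₂ : M₂ * Jstd n * M₂ᵀ = Jstd n)
    (hε₁ : ∀ m, 0 < ε₁ m) (hε₂ : ∀ m, 0 < ε₂ m)
    (h₁ : M₁ * S * M₁ᵀ = Matrix.fromBlocks (Matrix.diagonal ε₁) 0 0 (Matrix.diagonal ε₁))
    (h₂ : M₂ * S * M₂ᵀ = Matrix.fromBlocks (Matrix.diagonal ε₂) 0 0 (Matrix.diagonal ε₂)) :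
    ∃ σ : Equiv.Perm (Fin n), ∀ m, ε₁ m = ε₂ (σ m) := by
  have hroots : 2 • Finset.univ.val.map (fun m => -ε₁ m ^ 2) =
      2 • Finset.univ.val.map (fun m => -ε₂ m ^ 2) := by
    rw [← roots_charpoly_fromBlocks_diagonal_mul_Jstd_sq,
      ← roots_charpoly_fromBlocks_diagonal_mul_Jstd_sq, ← h₁, ← h₂,
      charpoly_pow_mul_Jstd_of_symplectic hM₁, charpoly_pow_mul_Jstd_of_symplectic hM₂]
  obtain ⟨σ, hσ⟩ := exists_equiv_of_map_univ_eq (nsmul_right_injective two_ne_zero hroots)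
  exact ⟨σ, fun m => (sq_eq_sq₀ (hε₁ m).le (hε₂ (σ m)).le).1 (neg_inj.1 (hσ m)).symm⟩

/-- Williamson normal form, uniqueness: the diagonal entries of the Williamson
normal form are unique up to reordering. -/
theorem stmt9 (n : ℕ) (S : Matrix (Fin n ⊕ Fin n) (Fin n ⊕ Fin n) ℝ) (hS : S.PosDef)
    (M₁ M₂ : Matrix (Fin n ⊕ Fin n) (Fin n ⊕ Fin n) ℝ) (ε₁ ε₂ : Fin n → ℝ)
    (hM₁ : M₁ * Jstd n * M₁ᵀ = Jstd n) (hM₂ : M₂ * Jstd n * M₂ᵀ = Jstd n)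
    (hε₁ : ∀ m, 0 < ε₁ m) (hε₂ : ∀ m, 0 < ε₂ m)
    (h₁ : M₁ * S * M₁ᵀ = Matrix.fromBlocks (Matrix.diagonal ε₁) 0 0 (Matrix.diagonal ε₁))
    (h₂ : M₂ * S * M₂ᵀ = Matrix.fromBlocks (Matrix.diagonal ε₂) 0 0 (Matrix.diagonal ε₂)) :
    ∃ σ : Equiv.Perm (Fin n), ∀ m, ε₁ m = ε₂ (σ m) :=
  stmt9_general n S M₁ M₂ ε₁ ε₂ hM₁ hM₂ hε₁ hε₂ h₁ h₂
end
end

section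
/- Let Σ be a 2n×2n real symmetric positive definite matrix with eigenemittances ε₁,...,ε_n and projected emittances ε̃₁,...,ε̃_n. Then ε̃₁·ε̃₂·...·ε̃_n ≥ ε₁·ε₂·...·ε_n, i.e., the product of the projected emittances is at least √det(Σ). -/
open Matrix Polynomial

noncomputable section

/-!
By Fischer's inequality, the determinant of a positive definite matrix is at most the product
of the determinants of its diagonal blocks; applied to the 2×2 blocks this bounds `det Σ` by
the product of the squared projected emittances. On the other hand `det Σ = det (Σ J)` because
`det J = 1`, and `det (Σ J)` is, up to the sign `(-1)^{2n}`, the constant coefficient of the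
characteristic polynomial `∏ (X - iε_m)(X + iε_m)`, i.e. `∏ ε_m²`.

Fischer's inequality itself comes from the Schur complement:
`det [[A, B], [Bᴴ, D]] = det A · det (D - Bᴴ A⁻¹ B) ≤ det A · det D`, since the determinant is
monotone on positive semidefinite matrices (`det (P + N) = det P · det (1 + Q N Q)` with
`Q = P^{-1/2}`, and `1 + Q N Q` has all eigenvalues at least `1`).
-/

namespace Matrix

section Fischer

variable {m n κ : Type*} [Fintype m] [DecidableEq m] [Fintype n] [DecidableEq n]
  [Fintype κ] [DecidableEq κ]

lemma PosSemidef.one_le_det_one_add {M : Matrix n n ℝ} (hM : M.PosSemidef) :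
    1 ≤ (1 + M).det := by
  rw [hM.1.spectral_theorem, ← map_one (Unitary.conjStarAlgAut ℝ _ hM.1.eigenvectorUnitary),
    ← map_add, Unitary.conjStarAlgAut_apply, det_conj_of_mul_eq_one (by simp) (by simp),
    ← diagonal_one, diagonal_add, det_diagonal]
  exact Finset.one_le_prod fun i _ => by simpa using hM.eigenvalues_nonneg i

open scoped MatrixOrder in
lemma PosDef.det_le_det_add {P N : Matrix n n ℝ} (hP : P.PosDef) (hN : N.PosSemidef) :
    P.det ≤ (P + N).det := by
  set Q := CFC.sqrt P⁻¹
  have hQQ : Q * Q = P⁻¹ := CFC.sqrt_mul_sqrt_self P⁻¹ hP.inv.posSemidef.nonneg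
  have hQ : Qᴴ = Q := (CFC.sqrt_nonneg P⁻¹).posSemidef.1
  have hfactor : P + N = P * (1 + Q * (Q * N)) := by
    rw [← Matrix.mul_assoc Q, hQQ, Matrix.mul_add, Matrix.mul_one, ← Matrix.mul_assoc,
      mul_nonsing_inv _ hP.det_pos.ne'.isUnit, Matrix.one_mul]
  have hconj : (Q * N * Q).PosSemidef := by
    simpa only [hQ] using hN.conjTranspose_mul_mul_same Q
  rw [hfactor, det_mul, det_one_add_mul_comm]
  exact le_mul_of_one_le_right hP.det_pos.le hconj.one_le_det_one_add

lemma PosSemidef.det_le_det_add {P N : Matrix n n ℝ} (hP : P.PosSemidef) (hN : N.PosSemidef) :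
    P.det ≤ (P + N).det := by
  by_cases hdet : P.det = 0
  · exact hdet ▸ (hP.add hN).det_nonneg
  · exact (hP.posDef_iff_det_ne_zero.mpr hdet).det_le_det_add hN

lemma PosDef.det_fromBlocks_le {A : Matrix m m ℝ} {B : Matrix m n ℝ} {C : Matrix n m ℝ}
    {D : Matrix n n ℝ} (h : (fromBlocks A B C D).PosDef) :
    (fromBlocks A B C D).det ≤ A.det * D.det := by
  obtain ⟨-, rfl, -, -⟩ := isHermitian_fromBlocks_iff.mp h.1
  have hA : A.PosDef := h.submatrix Sum.inl_injective
  have := invertibleOfIsUnitDet A hA.det_pos.ne'.isUnit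
  have hschur : (D - Bᴴ * A⁻¹ * B).PosSemidef := (PosDef.fromBlocks₁₁ B D hA).mp h.posSemidef
  have hcorr : (Bᴴ * A⁻¹ * B).PosSemidef := hA.inv.posSemidef.conjTranspose_mul_mul_same B
  rw [det_fromBlocks₁₁, invOf_eq_nonsing_inv]
  gcongr
  · exact hA.det_pos.le
  · simpa using hschur.det_le_det_add hcorr

variable (κ) in
def sumProdEquivProdFinSucc (k : ℕ) : κ ⊕ κ × Fin k ≃ κ × Fin (k + 1) where
  toFun := Sum.elim (fun a => (a, 0)) (fun p => (p.1, p.2.succ))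
  invFun p := Fin.cases (Sum.inl p.1) (fun i => Sum.inr (p.1, i)) p.2
  left_inv := by rintro (a | ⟨a, i⟩) <;> rfl
  right_inv := by rintro ⟨a, i⟩; cases i using Fin.cases <;> rfl

lemma PosDef.det_le_prod_det_diagonalBlocks {k : ℕ} {S : Matrix (κ × Fin k) (κ × Fin k) ℝ}
    (hS : S.PosDef) : S.det ≤ ∏ i, (S.submatrix (·, i) (·, i)).det := by
  induction k with
  | zero => simp
  | succ k ih =>
    set T := S.submatrix (sumProdEquivProdFinSucc κ k) (sumProdEquivProdFinSucc κ k)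
    have hT : T.PosDef := hS.submatrix (Equiv.injective _)
    calc S.det = T.det := (det_submatrix_equiv_self _ S).symm
      _ ≤ T.toBlocks₁₁.det * T.toBlocks₂₂.det := by
        rw [← fromBlocks_toBlocks T] at hT ⊢
        exact hT.det_fromBlocks_le
      _ ≤ T.toBlocks₁₁.det * ∏ i, (T.toBlocks₂₂.submatrix (·, i) (·, i)).det := by
        gcongr
        · exact (hT.submatrix Sum.inl_injective).det_pos.le
        · exact ih (hT.submatrix Sum.inr_injective)
      _ = ∏ i, (S.submatrix (·, i) (·, i)).det := by rw [Fin.prod_univ_succ]; rfl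

end Fischer

end Matrix

def finTwoProdEquiv (n : ℕ) : Fin 2 × Fin n ≃ Fin (2 * n) :=
  (Equiv.prodComm _ _).trans (finProdFinEquiv.trans (finCongr (mul_comm n 2)))

lemma finTwoProdEquiv_apply_val {n : ℕ} (p : Fin 2 × Fin n) :
    (finTwoProdEquiv n p : ℕ) = 2 * p.2 + p.1 := by
  simp [finTwoProdEquiv, add_comm]

lemma blk_eq_submatrix {n : ℕ} (A : Matrix (Fin (2 * n)) (Fin (2 * n)) ℝ) (m k : Fin n) :
    blk A m k =
      (A.submatrix (finTwoProdEquiv n) (finTwoProdEquiv n)).submatrix (·, m) (·, k) := by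
  ext i j
  simp only [blk, submatrix_apply]
  congr 1 <;> ext <;> simp [finTwoProdEquiv_apply_val]

lemma Matrix.PosDef.det_le_prod_det_blk {n : ℕ} {S : Matrix (Fin (2 * n)) (Fin (2 * n)) ℝ}
    (hS : S.PosDef) : S.det ≤ ∏ m, (blk S m m).det := by
  simp_rw [blk_eq_submatrix, ← det_submatrix_equiv_self (finTwoProdEquiv n) S]
  exact (hS.submatrix (Equiv.injective _)).det_le_prod_det_diagonalBlocks

lemma Jblock_submatrix_finTwoProdEquiv (n : ℕ) :
    (Jblock n).submatrix (finTwoProdEquiv n) (finTwoProdEquiv n) = blockDiagonal fun _ => J2 := by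
  ext ⟨i, m⟩ ⟨j, k⟩
  have hdiv : ∀ (m : Fin n) (i : Fin 2), (2 * (m : ℕ) + i) / 2 = m := by omega
  have hmod : ∀ (m : Fin n) (i : Fin 2), (2 * (m : ℕ) + i) % 2 = i := by omega
  simp only [submatrix_apply, Jblock, blockDiagonal_apply, finTwoProdEquiv_apply_val, hdiv, hmod,
    Fin.val_inj]

lemma det_Jblock (n : ℕ) : (Jblock n).det = 1 := by
  rw [← det_submatrix_equiv_self (finTwoProdEquiv n), Jblock_submatrix_finTwoProdEquiv,
    det_blockDiagonal]
  simp [J2, det_fin_two]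

lemma det_eq_prod_sq_of_hasEigenemittances {n : ℕ} {S : Matrix (Fin (2 * n)) (Fin (2 * n)) ℝ}
    {ε : Fin n → ℝ} (hε : hasEigenemittances S ε) : S.det = ∏ m, ε m ^ 2 := by
  have hcharpoly := det_eq_sign_charpoly_coeff ((S * Jblock n).map Complex.ofReal)
  have hdet : ((S * Jblock n).map Complex.ofReal).det = S.det := by
    rw [← mul_one S.det, ← det_Jblock n, ← det_mul]
    exact (RingHom.map_det Complex.ofRealHom _).symm
  rw [hε, coeff_zero_eq_eval_zero, eval_prod, Fintype.card_fin, pow_mul, neg_one_sq, one_pow,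
    one_mul, hdet] at hcharpoly
  have hfactor (m : Fin n) :
      eval 0 ((X - C (Complex.I * ε m)) * (X + C (Complex.I * ε m))) = ((ε m ^ 2 : ℝ) : ℂ) := by
    simp only [eval_mul, eval_sub, eval_add, eval_X, eval_C]
    push_cast
    linear_combination (-(ε m : ℂ) ^ 2) * Complex.I_sq
  simp only [hfactor] at hcharpoly
  exact_mod_cast hcharpoly

theorem stmt15_general (n : ℕ) (S : Matrix (Fin (2 * n)) (Fin (2 * n)) ℝ) (ε : Fin n → ℝ)
    (hS : S.PosDef) (hε : hasEigenemittances S ε) :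
    ∏ m : Fin n, ε m ≤ ∏ m : Fin n, Real.sqrt (blk S m m).det := by
  have hblk_nonneg (m : Fin n) : 0 ≤ (blk S m m).det := by
    rw [blk_eq_submatrix]
    exact ((hS.submatrix (Equiv.injective _)).submatrix (Prod.mk_left_injective m)).det_pos.le
  calc ∏ m, ε m ≤ |∏ m, ε m| := le_abs_self _
    _ ≤ Real.sqrt S.det := Real.abs_le_sqrt
        (by rw [det_eq_prod_sq_of_hasEigenemittances hε, Finset.prod_pow])
    _ ≤ Real.sqrt (∏ m, (blk S m m).det) := Real.sqrt_le_sqrt hS.det_le_prod_det_blk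
    _ = ∏ m, Real.sqrt (blk S m m).det := Real.sqrt_prod _ fun m _ => hblk_nonneg m

/-- The product of the projected emittances is at least the product of the
eigenemittances (a symplectic analogue of Hadamard's inequality). -/
theorem stmt15 (n : ℕ) (S : Matrix (Fin (2 * n)) (Fin (2 * n)) ℝ) (ε : Fin n → ℝ)
    (hS : S.PosDef) (hpos : ∀ m, 0 < ε m) (hε : hasEigenemittances S ε) :
    ∏ m : Fin n, ε m ≤ ∏ m : Fin n, Real.sqrt (blk S m m).det :=
  stmt15_general n S ε hS hε
end
end
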